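/- Let E be a finite-dimensional real inner product space, M ≥ 1, and let f_1, …, f_M : E → ℝ be differentiable, each with L-Lipschitz gradient for a common constant L > 0, and each bounded below with f_i^* := inf_{x∈E} f_i(x). For each t ∈ ℕ let T_t ⊆ E be a linear subspace. Fix x_0 ∈ E and a step size η with 0 < η ≤ 1/L, and define iterates x_{t+1} = x_t + η P_t, where P_t is the unique minimizer over T_t of Q_t(P) = max_{1≤i≤M} ⟨∇f_i(x_t), P⟩ + (1/2)‖P‖². Then for every T ≥ 1, min_{0≤t<T} ‖P_t‖ ≤ √( 2 · min_{1≤i≤M}( f_i(x_0) − f_i^* ) / (η T) ); in particular min_{0≤t<T} ‖P_t‖ = O( ((f_{i*}(x_0) − f_{i*}^*)/T)^{1/2} ), where i* attains min_i ( f_i(x_0) − f_i^* ). -/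

import Mathlib

open RealInnerProductSpace

lemma descent_lemma' {E : Type*} [NormedAddCommGroup E] [InnerProductSpace ℝ E] [CompleteSpace E]
    (f : E → ℝ) (f' : E → E) (L : ℝ) (hL : 0 ≤ L)
    (hdiff : ∀ x, HasGradientAt f (f' x) x)
    (hlip : ∀ x y, ‖f' x - f' y‖ ≤ L * ‖x - y‖) (x v : E) :
    f (x + v) ≤ f x + ⟪f' x, v⟫ + L / 2 * ‖v‖ ^ 2 := by
  set g : ℝ → ℝ := fun s => f (x + s • v) - s * ⟪f' x, v⟫ - L / 2 * s ^ 2 * ‖v‖ ^ 2 with hg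
  have hderiv : ∀ s : ℝ, HasDerivAt g
      (⟪f' (x + s • v), v⟫ - ⟪f' x, v⟫ - L * s * ‖v‖ ^ 2) s := by
    intro s
    have h1 : HasDerivAt (fun s : ℝ => x + s • v) v s := by
      simpa using ((hasDerivAt_id s).smul_const v).const_add x
    have h2 := (hdiff (x + s • v)).hasFDerivAt.comp_hasDerivAt s h1
    have h3 : HasDerivAt (fun s : ℝ => s * ⟪f' x, v⟫) ⟪f' x, v⟫ s := by
      simpa using (hasDerivAt_id s).mul_const ⟪f' x, v⟫
    have h4 : HasDerivAt (fun s : ℝ => L / 2 * s ^ 2 * ‖v‖ ^ 2) (L * s * ‖v‖ ^ 2) s := by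
      have := ((hasDerivAt_pow 2 s).const_mul (L / 2)).mul_const (‖v‖ ^ 2)
      refine this.congr_deriv ?_
      rw [show (2:ℕ) - 1 = 1 from rfl, pow_one]; push_cast; ring
    have h2' : HasDerivAt (fun s : ℝ => f (x + s • v)) ⟪f' (x + s • v), v⟫ s := by
      exact h2
    exact (h2'.sub h3).sub h4
  have hanti : AntitoneOn g (Set.Icc 0 1) := by
    apply antitoneOn_of_deriv_nonpos (convex_Icc 0 1)
    · exact fun s _ => ((hderiv s).differentiableAt).continuousAt.continuousWithinAt
    · intro s _
      exact ((hderiv s).differentiableAt).differentiableWithinAt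
    · intro s hs
      rw [interior_Icc] at hs
      rw [(hderiv s).deriv]
      have h5 : ⟪f' (x + s • v), v⟫ - ⟪f' x, v⟫ ≤ L * s * ‖v‖ ^ 2 := by
        rw [← inner_sub_left]
        calc ⟪f' (x + s • v) - f' x, v⟫ ≤ ‖f' (x + s • v) - f' x‖ * ‖v‖ :=
              real_inner_le_norm _ _
          _ ≤ L * ‖(x + s • v) - x‖ * ‖v‖ := by
              apply mul_le_mul_of_nonneg_right (hlip _ _) (norm_nonneg _)
          _ = L * s * ‖v‖ ^ 2 := by
              rw [add_sub_cancel_left, norm_smul, Real.norm_eq_abs,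
                abs_of_pos hs.1]; ring
      linarith
  have := hanti (Set.left_mem_Icc.2 zero_le_one) (Set.right_mem_Icc.2 zero_le_one) zero_le_one
  simp only [hg, one_smul, zero_smul, add_zero, one_pow, zero_pow, one_mul, zero_mul,
    mul_zero, sub_zero] at this
  linarith

/-- Non-asymptotic convergence of the multi-objective (MF-CCA style) gradient method
with identity retraction: with step size `0 < η ≤ 1/L`, after `T` steps
`min_{0≤t<T} ‖P_t‖ ≤ √(2 · min_i (f_i(x_0) − f_i^*) / (ηT))`. -/
theorem stmt_6 {E : Type*} [NormedAddCommGroup E] [InnerProductSpace ℝ E]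
    [FiniteDimensional ℝ E] (M : ℕ) (hM : 1 ≤ M)
    (f : Fin M → E → ℝ) (f' : Fin M → E → E) (L : ℝ) (hL : 0 < L)
    (hdiff : ∀ i x, HasGradientAt (f i) (f' i x) x)
    (hlip : ∀ i x y, ‖f' i x - f' i y‖ ≤ L * ‖x - y‖)
    (fstar : Fin M → ℝ) (hfstar : ∀ i, IsGLB (Set.range (f i)) (fstar i))
    (Tt : ℕ → Submodule ℝ E) (η : ℝ) (hη0 : 0 < η) (hηL : η ≤ 1 / L)
    (x : ℕ → E) (P : ℕ → E)
    (hPmem : ∀ t, P t ∈ Tt t)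
    (hPmin : ∀ t, ∀ P' ∈ Tt t,
      (Finset.univ.sup' ⟨⟨0, hM⟩, Finset.mem_univ _⟩ fun i => ⟪f' i (x t), P t⟫) +
          (1 / 2) * ‖P t‖ ^ 2 ≤
        (Finset.univ.sup' ⟨⟨0, hM⟩, Finset.mem_univ _⟩ fun i => ⟪f' i (x t), P'⟫) +
          (1 / 2) * ‖P'‖ ^ 2)
    (hx : ∀ t, x (t + 1) = x t + η • P t) :
    ∀ T : ℕ, 1 ≤ T → ∃ t < T, ‖P t‖ ≤
      Real.sqrt
        (2 * (Finset.univ.inf' ⟨⟨0, hM⟩, Finset.mem_univ _⟩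
            fun i => f i (x 0) - fstar i) / (η * T)) := by
  have hne : (Finset.univ : Finset (Fin M)).Nonempty := ⟨⟨0, hM⟩, Finset.mem_univ _⟩
  -- Step 1: key inner product bound : ⟪f' i (x t), P t⟫ ≤ -‖P t‖^2
  have key : ∀ t i, ⟪f' i (x t), P t⟫ ≤ -‖P t‖ ^ 2 := by
    intro t i
    set c := ‖P t‖ ^ 2 with hc
    have hc0 : 0 ≤ c := by positivity
    set m := Finset.univ.sup' hne fun i => ⟪f' i (x t), P t⟫ with hm
    have him : ⟪f' i (x t), P t⟫ ≤ m := Finset.le_sup' (fun j => ⟪f' j (x t), P t⟫) (Finset.mem_univ i)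
    have hQ : ∀ s : ℝ, 0 ≤ s → m + (1/2) * c ≤ s * m + (1/2) * s ^ 2 * c := by
      intro s hs
      have h1 := hPmin t (s • P t) (Submodule.smul_mem _ s (hPmem t))
      have h2 : (Finset.univ.sup' hne fun j => ⟪f' j (x t), s • P t⟫) ≤ s * m := by
        apply Finset.sup'_le
        intro j _
        rw [real_inner_smul_right]
        exact mul_le_mul_of_nonneg_left (Finset.le_sup' (fun j => ⟪f' j (x t), P t⟫) (Finset.mem_univ j)) hs
      have h3 : ‖s • P t‖ ^ 2 = s ^ 2 * c := by
        rw [norm_smul, Real.norm_eq_abs, mul_pow, sq_abs, hc]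
      calc m + (1/2) * c ≤ _ + (1/2) * ‖s • P t‖ ^ 2 := h1
        _ ≤ s * m + (1/2) * (s^2 * c) := by rw [h3]; linarith
        _ = s * m + (1/2) * s ^ 2 * c := by ring
    have h0 := hQ 0 le_rfl
    simp at h0
    -- h0 : m + c/2 ≤ 0, i.e. m ≤ -c/2
    rcases eq_or_lt_of_le hc0 with hc' | hc'
    · have : c = 0 := hc'.symm
      have : m ≤ 0 := by nlinarith
      nlinarith
    · have hsnn : 0 ≤ -m / c := by
        apply div_nonneg _ hc0
        nlinarith
      have h2 := hQ (-m / c) hsnn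
      have hmc : m ≤ -c := by nlinarith [sq_nonneg (m + c), div_mul_cancel₀ (-m) (ne_of_gt hc')]
      exact him.trans hmc
  -- Step 2: per-step decrease
  have hstep : ∀ t i, f i (x (t + 1)) ≤ f i (x t) - η / 2 * ‖P t‖ ^ 2 := by
    intro t i
    have hd := descent_lemma' (f i) (f' i) L hL.le (hdiff i) (hlip i) (x t) (η • P t)
    rw [← hx t] at hd
    have h1 : ⟪f' i (x t), η • P t⟫ = η * ⟪f' i (x t), P t⟫ := real_inner_smul_right _ _ _
    have h2 : ‖η • P t‖ ^ 2 = η ^ 2 * ‖P t‖ ^ 2 := by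
      rw [norm_smul, Real.norm_eq_abs, mul_pow, sq_abs]
    have h3 := key t i
    have hLη : L * η ≤ 1 := by
      rw [le_div_iff₀ hL] at hηL; linarith
    nlinarith [sq_nonneg (‖P t‖), mul_nonneg hη0.le (sq_nonneg ‖P t‖)]
  -- Step 3: telescoping
  have htel : ∀ i T, η / 2 * ∑ t ∈ Finset.range T, ‖P t‖ ^ 2 ≤ f i (x 0) - f i (x T) := by
    intro i T
    induction T with
    | zero => simp
    | succ T ih =>
      rw [Finset.sum_range_succ]
      have := hstep T i
      linarith
  intro T hT
  -- choose minimizing t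
  have hrne : (Finset.range T).Nonempty := ⟨0, Finset.mem_range.2 hT⟩
  obtain ⟨t0, ht0mem, ht0⟩ := Finset.exists_min_image (Finset.range T) (fun t => ‖P t‖) hrne
  refine ⟨t0, Finset.mem_range.1 ht0mem, ?_⟩
  have hinf0 : 0 ≤ (Finset.univ.inf' hne fun i => f i (x 0) - fstar i) :=
    Finset.le_inf' hne _ fun i _ => by have := (hfstar i).1 ⟨x 0, rfl⟩; linarith
  rw [Real.le_sqrt (norm_nonneg _) (by positivity)]
  rw [le_div_iff₀ (by positivity)]
  obtain ⟨i, _, hi⟩ := Finset.exists_mem_eq_inf' hne (fun i => f i (x 0) - fstar i)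
  rw [hi]
  have hfs : fstar i ≤ f i (x T) := (hfstar i).1 ⟨x T, rfl⟩
  have hsum : (T : ℝ) * ‖P t0‖ ^ 2 ≤ ∑ t ∈ Finset.range T, ‖P t‖ ^ 2 := by
    calc (T : ℝ) * ‖P t0‖ ^ 2 = ∑ _t ∈ Finset.range T, ‖P t0‖ ^ 2 := by
          rw [Finset.sum_const, Finset.card_range]; ring
      _ ≤ _ := Finset.sum_le_sum fun t ht =>
          pow_le_pow_left₀ (norm_nonneg _) (ht0 t ht) 2
  have := htel i T
  nlinarith
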